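/- arXiv:2603.17771 — 2 statements merged into one kernel-verified Lean document; each statement's English description precedes it below -/
import Mathlib

section
/- Fix d ≥ 1, γ ∈ ℝ^d, and ε > 0, and define RMSNorm : ℝ^d → ℝ^d by RMSNorm(x)_i = γ_i x_i / rms(x) with rms(x) = sqrt(‖x‖₂²/d + ε). Then for every x ∈ ℝ^d, the operator norm of the Fréchet derivative of RMSNorm at x satisfies ‖D RMSNorm(x)‖_op ≤ ‖γ‖_∞ / rms(x), where ‖γ‖_∞ = max_i |γ_i|. -/
/-!
RMSNorm is the diagonal map `diag γ`, whose operator norm is `‖γ‖_∞`, composed with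
`N y = y / √(a ‖y‖² + ε)` for `a = 1 / d`. With `r = √(a ‖x‖² + ε)` the derivative of `N` at `x`
is `r⁻¹ (I - (a / r²) x xᵀ)`, and since `0 ≤ (a / r²) ‖x‖² ≤ 1` the bracket is a contraction.
-/

open scoped RealInnerProductSpace

section RMSNormalize

variable {E : Type*} [NormedAddCommGroup E] [InnerProductSpace ℝ E]

theorem norm_id_sub_smulRight_innerSL_le (x : E) {c : ℝ} (hc : 0 ≤ c) (hcx : c * ‖x‖ ^ 2 ≤ 2) :
    ‖ContinuousLinearMap.id ℝ E - (c • innerSL ℝ x).smulRight x‖ ≤ 1 := by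
  refine ContinuousLinearMap.opNorm_le_bound _ zero_le_one fun v => ?_
  suffices ‖v - (c * ⟪x, v⟫) • x‖ ^ 2 ≤ ‖v‖ ^ 2 by
    simpa using le_of_pow_le_pow_left₀ two_ne_zero (norm_nonneg v) this
  rw [norm_sub_sq_real, inner_smul_right, norm_smul, mul_pow, Real.norm_eq_abs, sq_abs,
    real_inner_comm]
  -- the correction equals `c ⟪x, v⟫² (2 - c ‖x‖²) ≥ 0`
  nlinarith [mul_nonneg (mul_nonneg hc (sq_nonneg ⟪v, x⟫)) (sub_nonneg.2 hcx)]

variable (a ε : ℝ)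

noncomputable def rmsNormalize (y : E) : E := (√(a * ‖y‖ ^ 2 + ε))⁻¹ • y

theorem hasFDerivAt_inv_sqrt_mul_norm_sq_add {x : E} (hx : 0 < a * ‖x‖ ^ 2 + ε) :
    HasFDerivAt (fun y : E => (√(a * ‖y‖ ^ 2 + ε))⁻¹)
      ((-(a / √(a * ‖x‖ ^ 2 + ε) ^ 3)) • innerSL ℝ x) x := by
  have hr : √(a * ‖x‖ ^ 2 + ε) ≠ 0 := (Real.sqrt_pos.2 hx).ne'
  have hq : HasFDerivAt (fun y : E => a * ‖y‖ ^ 2 + ε) (a • 2 • innerSL ℝ x) x :=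
    ((hasStrictFDerivAt_norm_sq x).hasFDerivAt.const_smul a).add_const ε
  refine ((hasDerivAt_inv hr).comp_hasFDerivAt x (hq.sqrt hx.ne')).congr_fderiv ?_
  ext v
  simp only [FunLike.coe_smul, Pi.smul_apply, smul_eq_mul, two_smul, add_apply]
  field_simp
  ring

theorem hasFDerivAt_rmsNormalize {x : E} (hx : 0 < a * ‖x‖ ^ 2 + ε) :
    HasFDerivAt (rmsNormalize a ε) ((√(a * ‖x‖ ^ 2 + ε))⁻¹ •
      (ContinuousLinearMap.id ℝ E -
        ((a / √(a * ‖x‖ ^ 2 + ε) ^ 2) • innerSL ℝ x).smulRight x)) x := by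
  refine ((hasFDerivAt_inv_sqrt_mul_norm_sq_add a ε hx).smul (hasFDerivAt_id x)).congr_fderiv ?_
  ext v
  simp only [FunLike.coe_smul, FunLike.coe_sub, add_apply, ContinuousLinearMap.smulRight_apply,
    Pi.smul_apply, Pi.sub_apply, smul_eq_mul, id, ContinuousLinearMap.coe_id']
  module

variable {a ε}

theorem differentiableAt_rmsNormalize (ha : 0 ≤ a) (hε : 0 < ε) (x : E) :
    DifferentiableAt ℝ (rmsNormalize a ε) x :=
  (hasFDerivAt_rmsNormalize a ε (by positivity)).differentiableAt

theorem norm_fderiv_rmsNormalize_le (ha : 0 ≤ a) (hε : 0 < ε) (x : E) :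
    ‖fderiv ℝ (rmsNormalize a ε) x‖ ≤ (√(a * ‖x‖ ^ 2 + ε))⁻¹ := by
  have hx : 0 < a * ‖x‖ ^ 2 + ε := by positivity
  have hc : a / √(a * ‖x‖ ^ 2 + ε) ^ 2 * ‖x‖ ^ 2 ≤ 2 := by
    rw [Real.sq_sqrt hx.le, div_mul_eq_mul_div, div_le_iff₀ hx]
    linarith
  rw [(hasFDerivAt_rmsNormalize a ε hx).fderiv, norm_smul, Real.norm_of_nonneg (by positivity)]
  exact mul_le_of_le_one_right (by positivity)
    (norm_id_sub_smulRight_innerSL_le x (by positivity) hc)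

end RMSNormalize

open Matrix in
open scoped Matrix.Norms.L2Operator in
theorem norm_toEuclideanCLM_diagonal_le {ι : Type*} [Fintype ι] [DecidableEq ι] (γ : ι → ℝ) :
    ‖toEuclideanCLM (𝕜 := ℝ) (diagonal γ)‖ ≤ ⨆ i, |γ i| := by
  rw [l2_opNorm_toEuclideanCLM, l2_opNorm_diagonal]
  exact (pi_norm_le_iff_of_nonneg (Real.iSup_nonneg fun i => abs_nonneg (γ i))).2
    fun i => le_ciSup (f := fun i => |γ i|) (Finite.bddAbove_range _) i

theorem rmsnorm_fderiv_opNorm_le_general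
    {d : ℕ} (γ : Fin d → ℝ) (ε : ℝ) (hε : 0 < ε)
    (rms : EuclideanSpace ℝ (Fin d) → ℝ)
    (hrms : ∀ x, rms x = Real.sqrt (‖x‖ ^ 2 / d + ε))
    (RMSNorm : EuclideanSpace ℝ (Fin d) → EuclideanSpace ℝ (Fin d))
    (hRMS : ∀ x, ∀ i, RMSNorm x i = γ i * x i / rms x) :
    ∀ x : EuclideanSpace ℝ (Fin d),
      DifferentiableAt ℝ RMSNorm x ∧
      ‖fderiv ℝ RMSNorm x‖ ≤ (⨆ i, |γ i|) / rms x := by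
  intro x
  set D := Matrix.toEuclideanCLM (𝕜 := ℝ) (Matrix.diagonal γ)
  have hrms_fun : rms = fun y => √((d : ℝ)⁻¹ * ‖y‖ ^ 2 + ε) := by
    funext y
    rw [hrms, div_eq_inv_mul]
  have hRMS_comp : RMSNorm = D ∘ rmsNormalize (d : ℝ)⁻¹ ε := by
    funext y
    ext i
    simp only [hRMS, hrms_fun, div_eq_mul_inv, Function.comp_apply, rmsNormalize, map_smul,
      PiLp.smul_apply, Matrix.ofLp_toEuclideanCLM, Matrix.mulVec_diagonal, smul_eq_mul, D]
    ring
  have hN := differentiableAt_rmsNormalize (inv_nonneg.2 d.cast_nonneg) hε x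
  subst hRMS_comp hrms_fun
  refine ⟨D.differentiableAt.comp x hN, ?_⟩
  rw [fderiv_comp x D.differentiableAt hN, D.fderiv, div_eq_mul_inv]
  exact (D.opNorm_comp_le _).trans (mul_le_mul (norm_toEuclideanCLM_diagonal_le γ)
    (norm_fderiv_rmsNormalize_le (inv_nonneg.2 d.cast_nonneg) hε x) (norm_nonneg _)
    (Real.iSup_nonneg fun i => abs_nonneg (γ i)))

/-- **Activation-dependent compression under RMSNorm (operator-norm bound).**
With `rms x = √(‖x‖²/d + ε)` and `RMSNorm(x)_i = γ_i x_i / rms x`, the map `RMSNorm` is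
differentiable and the operator norm of its Fréchet derivative at `x` is bounded by
`‖γ‖_∞ / rms x`, where `‖γ‖_∞ = max_i |γ_i|`. -/
theorem rmsnorm_fderiv_opNorm_le
    {d : ℕ} (hd : 1 ≤ d) (γ : Fin d → ℝ) (ε : ℝ) (hε : 0 < ε)
    (rms : EuclideanSpace ℝ (Fin d) → ℝ)
    (hrms : ∀ x, rms x = Real.sqrt (‖x‖ ^ 2 / d + ε))
    (RMSNorm : EuclideanSpace ℝ (Fin d) → EuclideanSpace ℝ (Fin d))
    (hRMS : ∀ x, ∀ i, RMSNorm x i = γ i * x i / rms x) :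
    ∀ x : EuclideanSpace ℝ (Fin d),
      DifferentiableAt ℝ RMSNorm x ∧
      ‖fderiv ℝ RMSNorm x‖ ≤ (⨆ i, |γ i|) / rms x :=
  rmsnorm_fderiv_opNorm_le_general γ ε hε rms hrms RMSNorm hRMS
end

section
/- Fix d ≥ 1 and C > 0, define φ(r) = r/(r + C), and define the V-scale map Φ : ℝ^d → ℝ^d by Φ(v) = φ(‖v‖₂²) v. Then for every v ∈ ℝ^d, the operator norm of the Fréchet derivative of Φ at v equals (r² + 3Cr)/(r + C)², where r = ‖v‖₂². -/
open scoped RealInnerProductSpace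

/-!
The derivative of a radial rescaling `w ↦ g(‖w‖²) w` at `v` is `g(r) I + 2 g'(r) v ⊗ v` with
`r = ‖v‖²`. When `g(r), g'(r) ≥ 0` this operator is positive semidefinite, so its norm is its largest
eigenvalue `g(r) + 2 g'(r) r`, attained along `v` (along any vector if `v = 0`). For
`g = φ` this is `r/(r + C) + 2Cr/(r + C)² = (r² + 3Cr)/(r + C)²`.
-/

open InnerProductSpace ContinuousLinearMap

section ScalarAddRankOne

variable {E : Type*} [NormedAddCommGroup E] [InnerProductSpace ℝ E]

noncomputable def scalarAddRankOne (a b : ℝ) (v : E) : E →L[ℝ] E :=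
  a • ContinuousLinearMap.id ℝ E + b • rankOne ℝ v v

@[simp]
theorem scalarAddRankOne_apply (a b : ℝ) (v w : E) :
    scalarAddRankOne a b v w = a • w + (b * ⟪v, w⟫) • v := by
  simp [scalarAddRankOne, mul_smul]

theorem norm_scalarAddRankOne_apply_le {a b : ℝ} (ha : 0 ≤ a) (hb : 0 ≤ b) (v w : E) :
    ‖scalarAddRankOne a b v w‖ ≤ (a + b * ‖v‖ ^ 2) * ‖w‖ :=
  calc ‖scalarAddRankOne a b v w‖
      ≤ ‖a • w‖ + ‖(b * ⟪v, w⟫) • v‖ := by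
        rw [scalarAddRankOne_apply]; exact norm_add_le _ _
    _ = a * ‖w‖ + b * |⟪v, w⟫| * ‖v‖ := by
        rw [norm_smul, norm_smul, Real.norm_of_nonneg ha, Real.norm_eq_abs, abs_mul, abs_of_nonneg hb]
    _ ≤ a * ‖w‖ + b * (‖v‖ * ‖w‖) * ‖v‖ := by gcongr; exact abs_real_inner_le_norm v w
    _ = (a + b * ‖v‖ ^ 2) * ‖w‖ := by ring

theorem exists_ne_zero_scalarAddRankOne_apply_eq_smul [Nontrivial E] (a b : ℝ) (v : E) :
    ∃ u : E, u ≠ 0 ∧ scalarAddRankOne a b v u = (a + b * ‖v‖ ^ 2) • u := by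
  rcases eq_or_ne v 0 with rfl | hv
  · obtain ⟨u, hu⟩ := exists_ne (0 : E)
    exact ⟨u, hu, by simp⟩
  · refine ⟨v, hv, ?_⟩
    rw [scalarAddRankOne_apply, real_inner_self_eq_norm_sq, add_smul, mul_smul]

theorem norm_scalarAddRankOne [Nontrivial E] {a b : ℝ} (ha : 0 ≤ a) (hb : 0 ≤ b) (v : E) :
    ‖scalarAddRankOne a b v‖ = a + b * ‖v‖ ^ 2 := by
  have hμ : 0 ≤ a + b * ‖v‖ ^ 2 := by positivity
  refine le_antisymm (opNorm_le_bound _ hμ (norm_scalarAddRankOne_apply_le ha hb v)) ?_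
  obtain ⟨u, hu, hTu⟩ := exists_ne_zero_scalarAddRankOne_apply_eq_smul a b v
  have := (scalarAddRankOne a b v).le_opNorm u
  rw [hTu, norm_smul, Real.norm_of_nonneg hμ] at this
  exact le_of_mul_le_mul_right this (norm_pos_iff.mpr hu)

theorem HasDerivAt.hasFDerivAt_comp_norm_sq_smul {g : ℝ → ℝ} {g' : ℝ} {v : E}
    (hg : HasDerivAt g g' (‖v‖ ^ 2)) :
    HasFDerivAt (fun w : E ↦ g (‖w‖ ^ 2) • w) (scalarAddRankOne (g (‖v‖ ^ 2)) (2 * g') v) v := by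
  have := (hg.comp_hasFDerivAt v (hasStrictFDerivAt_norm_sq v).hasFDerivAt).smul
    (hasFDerivAt_id v)
  refine this.congr_fderiv (ContinuousLinearMap.ext fun w ↦ ?_)
  simp [two_smul, mul_smul, add_smul, two_mul]

end ScalarAddRankOne

theorem hasDerivAt_div_add_const {C r : ℝ} (hr : r + C ≠ 0) :
    HasDerivAt (fun s ↦ s / (s + C)) (C / (r + C) ^ 2) r :=
  ((hasDerivAt_id' r).div ((hasDerivAt_id' r).add_const C) hr).congr_deriv (by ring)

/-- **Operator norm of the V-scale Jacobian.**
With `φ(r) = r/(r + C)` and `Φ(v) = φ(‖v‖²) v`, the operator norm of the Fréchet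
derivative of `Φ` at `v` equals `(r² + 3Cr)/(r + C)²`, where `r = ‖v‖²`. -/
theorem vscale_fderiv_opNorm_eq
    {d : ℕ} (hd : 1 ≤ d) (C : ℝ) (hC : 0 < C)
    (φ : ℝ → ℝ) (hφ : ∀ r, φ r = r / (r + C))
    (Φ : EuclideanSpace ℝ (Fin d) → EuclideanSpace ℝ (Fin d))
    (hΦ : ∀ v, Φ v = φ (‖v‖ ^ 2) • v) :
    ∀ v : EuclideanSpace ℝ (Fin d),
      ‖fderiv ℝ Φ v‖ = ((‖v‖ ^ 2) ^ 2 + 3 * C * ‖v‖ ^ 2) / (‖v‖ ^ 2 + C) ^ 2 := by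
  intro v
  have : Nonempty (Fin d) := ⟨⟨0, hd⟩⟩
  have hrC : ‖v‖ ^ 2 + C ≠ 0 := by positivity
  obtain rfl : φ = fun s ↦ s / (s + C) := funext hφ
  obtain rfl : Φ = fun w ↦ (‖w‖ ^ 2 / (‖w‖ ^ 2 + C)) • w := funext hΦ
  rw [(hasDerivAt_div_add_const hrC).hasFDerivAt_comp_norm_sq_smul.fderiv,
    norm_scalarAddRankOne (by positivity) (by positivity)]
  field_simp
  ring
end
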